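/- arXiv:1205.4491 — 3 statements merged into one kernel-verified Lean document; each statement's English description precedes it below -/
import Mathlib

section
/- Let k be an algebraic closure of F_3. The normalizer in PGL_2(k) of the subgroup PSL_2(F_3) (embedded via the inclusion F_3 ↪ k) is equal to PGL_2(F_3) (embedded via the same inclusion). -/
/-!
`PSL₂(𝔽₃) ≅ A₄` has a unique Klein four-subgroup `V = {1, a, b, ab}`; its nontrivial elements are
exactly the involutions of `PSL₂(𝔽₃)`. An element `g` of the normalizer in `PGL₂(k)` therefore
permutes `a, b, ab` by conjugation. Since `PGL₂(𝔽₃) ≅ S₄` induces every permutation of them,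
multiplying `g` by a suitable element of `PGL₂(𝔽₃)` yields an element centralizing `V`. Over any
field with `2 ≠ 0`, a computation with `2 × 2` matrices shows that `V` is its own centralizer in
`PGL₂`, so `g ∈ PGL₂(𝔽₃)`. The reverse inclusion holds because `SL₂` is normal in `GL₂`.
-/

open Matrix

noncomputable section

/-- `PGL₂` of a field (or commutative ring): the quotient of `GL₂` by its center. -/
abbrev PGL2 (K : Type*) [CommRing K] : Type _ :=
  GL (Fin 2) K ⧸ Subgroup.center (GL (Fin 2) K)

/-- The natural projection `GL₂(K) → PGL₂(K)`. -/
def toPGL2 (K : Type*) [CommRing K] : GL (Fin 2) K →* PGL2 K :=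
  QuotientGroup.mk' _

/-- The image of `PGL₂(R)` in `PGL₂(k)` induced by a ring homomorphism `f : R →+* k`
(e.g. the inclusion of a finite field into an algebraic closure). -/
def PGLsub {R k : Type*} [CommRing R] [CommRing k] (f : R →+* k) : Subgroup (PGL2 k) :=
  ((toPGL2 k).comp (Matrix.GeneralLinearGroup.map f)).range

/-- The image of `PSL₂(R)` (i.e. the image of `SL₂(R)`) in `PGL₂(k)` induced by a ring
homomorphism `f : R →+* k`. -/
def PSLsub {R k : Type*} [CommRing R] [CommRing k] (f : R →+* k) : Subgroup (PGL2 k) :=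
  ((toPGL2 k).comp ((Matrix.GeneralLinearGroup.map f).comp
    Matrix.SpecialLinearGroup.toGL)).range

/-- Two subgroups of a group are conjugate. -/
def IsConjSubgroup {G : Type*} [Group G] (H K : Subgroup G) : Prop :=
  ∃ g : G, Subgroup.map (MulAut.conj g).toMonoidHom H = K

theorem Subgroup.exists_conj_eq_map_of_mem_normalizer_map {G H : Type*} [Group G] [Group H]
    {ι : G →* H} (hι : Function.Injective ι) {P : Subgroup G} {g : H}
    (hg : g ∈ Subgroup.normalizer (P.map ι : Set H)) {x : G} (hx : x ∈ P) :
    ∃ y ∈ P, orderOf y = orderOf x ∧ g * ι x * g⁻¹ = ι y := by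
  obtain ⟨y, hy, hxy⟩ := (hg (ι x)).1 ⟨x, hx, rfl⟩
  refine ⟨y, hy, ?_, hxy.symm⟩
  rw [← orderOf_injective ι hι, hxy, ← MulAut.conj_apply, MulEquiv.orderOf_eq,
    orderOf_injective ι hι]

theorem commute_inv_mul_of_conj_eq {G : Type*} [Group G] {g t y : G}
    (h : g * y * g⁻¹ = t * y * t⁻¹) : Commute (t⁻¹ * g) y := by
  rw [Commute, SemiconjBy]
  calc t⁻¹ * g * y = t⁻¹ * (g * y * g⁻¹) * g := by group
    _ = y * (t⁻¹ * g) := by rw [h]; group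

namespace PGL2

section CommRing

variable {R K : Type*} [CommRing R] [CommRing K]

theorem toPGL2_surjective : Function.Surjective (toPGL2 R) :=
  QuotientGroup.mk'_surjective _

theorem toPGL2_eq_one_iff {M : GL (Fin 2) R} :
    toPGL2 R M = 1 ↔ M.val ∈ Set.range (Matrix.scalar (Fin 2)) :=
  ProjGenLinGroup.mk_eq_one.trans GeneralLinearGroup.mem_center_iff_val_mem_range_scalar

theorem toPGL2_eq_toPGL2_iff {M N : GL (Fin 2) R} :
    toPGL2 R M = toPGL2 R N ↔ ∃ u : Rˣ, N.val = (u : R) • M.val := by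
  refine ProjGenLinGroup.mk_eq_mk_iff.trans (exists_congr fun u => ?_)
  rw [eq_comm, Units.ext_iff]
  simp [Matrix.smul_eq_mul_diagonal]

theorem toPGL2_eq_toPGL2_of_val_eq_or_eq_neg {M N : GL (Fin 2) R}
    (h : N.val = M.val ∨ N.val = -M.val) : toPGL2 R M = toPGL2 R N :=
  toPGL2_eq_toPGL2_iff.2 <| h.elim (fun h => ⟨1, by simp [h]⟩) fun h => ⟨-1, by simp [h]⟩

theorem toPGL2_conj_eq_of_mul_eq {T X Y : GL (Fin 2) R}
    (h : T.val * X.val = Y.val * T.val ∨ T.val * X.val = -(Y.val * T.val)) :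
    toPGL2 R T * toPGL2 R X * (toPGL2 R T)⁻¹ = toPGL2 R Y := by
  rw [← map_mul, ← map_inv, ← map_mul]
  refine (toPGL2_eq_toPGL2_of_val_eq_or_eq_neg ?_).symm
  simp only [Units.val_mul]
  rcases h with h | h
  · left; rw [h, mul_assoc, Units.mul_inv, mul_one]
  · right; rw [h, neg_mul, mul_assoc, Units.mul_inv, mul_one]

def map (f : R →+* K) : PGL2 R →* PGL2 K :=
  QuotientGroup.map _ _ (GeneralLinearGroup.map f) (GeneralLinearGroup.map_center_le f)

theorem map_injective {f : R →+* K} (hf : Function.Injective f) : Function.Injective (map f) := by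
  refine (injective_iff_map_eq_one _).2 fun x hx => ?_
  obtain ⟨M, rfl⟩ := toPGL2_surjective x
  obtain ⟨a, ha⟩ := toPGL2_eq_one_iff.1 hx
  have hM : ∀ i j, f (M.val i j) = Matrix.scalar (Fin 2) a i j := fun i j => by
    rw [ha]; rfl
  refine toPGL2_eq_one_iff.2 ⟨M.val 0 0, ?_⟩
  have h00 := hM 0 0
  have h11 := hM 1 1
  ext i j
  apply hf
  fin_cases i <;> fin_cases j <;> simp_all [hM 0 1, hM 1 0]

def psl (R : Type*) [CommRing R] : Subgroup (PGL2 R) :=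
  ((toPGL2 R).comp SpecialLinearGroup.toGL).range

theorem _root_.Matrix.SpecialLinearGroup.range_toGL_normal (n : Type*) [Fintype n]
    [DecidableEq n] :
    (SpecialLinearGroup.toGL : SpecialLinearGroup n R →* GL n R).range.Normal := by
  constructor
  rintro _ ⟨S, rfl⟩ G
  exact ⟨⟨G.val * S.val * (G⁻¹).val, by rw [det_units_conj, S.2]⟩, Units.ext rfl⟩

instance psl_normal : (psl R).Normal := by
  rw [psl, MonoidHom.range_comp]
  exact (SpecialLinearGroup.range_toGL_normal _).map _ toPGL2_surjective

theorem PGLsub_eq_range (f : R →+* K) : PGLsub f = (map f).range := by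
  rw [PGLsub, show (toPGL2 K).comp (GeneralLinearGroup.map f) = (map f).comp (toPGL2 R) from rfl,
    MonoidHom.range_comp, MonoidHom.range_eq_top.2 toPGL2_surjective, ← MonoidHom.range_eq_map]

theorem PSLsub_eq_map (f : R →+* K) : PSLsub f = (psl R).map (map f) := by
  rw [PSLsub, psl, MonoidHom.map_range]
  rfl

theorem PGLsub_le_normalizer_PSLsub (f : R →+* K) :
    PGLsub f ≤ Subgroup.normalizer (PSLsub f : Set (PGL2 K)) := by
  rw [PGLsub_eq_range, PSLsub_eq_map, MonoidHom.range_eq_map, ← (psl R).normalizer_eq_top]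
  exact Subgroup.le_normalizer_map _

end CommRing

end PGL2

section Klein

/-- When `2` is invertible, the images of `kleinA` and `kleinB` in `PGL₂` generate a Klein
four-group: both square to scalars and they anticommute. -/
def kleinA (R : Type*) [CommRing R] : Matrix (Fin 2) (Fin 2) R := !![0, 1; -1, 0]

def kleinB (R : Type*) [CommRing R] : Matrix (Fin 2) (Fin 2) R := !![1, 1; 1, -1]

variable {R S : Type*} [CommRing R] [CommRing S]

theorem kleinA_map (f : R →+* S) : (kleinA R).map f = kleinA S := by
  ext i j; fin_cases i <;> fin_cases j <;> simp [kleinA]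

theorem kleinB_map (f : R →+* S) : (kleinB R).map f = kleinB S := by
  ext i j; fin_cases i <;> fin_cases j <;> simp [kleinB]

variable {K : Type*} [Field K]

theorem pow_card_eq_one_of_mul_eq_smul_mul {n : Type*} [Fintype n] [DecidableEq n]
    {M A : Matrix n n K} (hM : M.det ≠ 0) (hA : A.det ≠ 0) {ε : K}
    (h : M * A = ε • (A * M)) : ε ^ Fintype.card n = 1 := by
  have := congrArg det h
  rw [det_mul, det_smul, det_mul, mul_comm A.det] at this
  exact (mul_right_cancel₀ (mul_ne_zero hM hA) ((one_mul _).trans this)).symm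

theorem eq_smul_of_mul_kleinA_of_mul_kleinB (h2 : (2 : K) ≠ 0) {M : Matrix (Fin 2) (Fin 2) K}
    (hM : M.det ≠ 0) {ε δ : K} (hA : M * kleinA K = ε • (kleinA K * M))
    (hB : M * kleinB K = δ • (kleinB K * M)) :
    ∃ c : K, M = c • 1 ∨ M = c • kleinA K ∨ M = c • kleinB K ∨ M = c • (kleinA K * kleinB K) := by
  have hε : ε ^ 2 = 1 := pow_card_eq_one_of_mul_eq_smul_mul hM (by simp [kleinA]) hA
  rw [M.eta_fin_two] at hA hB ⊢
  generalize M 0 0 = p, M 0 1 = q, M 1 0 = r, M 1 1 = s at hA hB ⊢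
  have hs : p = ε * s := by simpa [kleinA] using congrFun₂ hA 0 1
  have hr : r = -(ε * q) := by simpa [kleinA] using congrFun₂ hA 1 1
  have hB₀₀ : p + q = δ * (p + r) := by simpa [kleinB] using congrFun₂ hB 0 0
  have hB₀₁ : p - q = δ * (q + s) := by simpa [kleinB, sub_eq_add_neg] using congrFun₂ hB 0 1
  -- `ε = 1` puts `M` in the span of `1, kleinA`, and `ε = -1` in that of `kleinB, kleinA * kleinB`;
  -- the relation with `kleinB` then leaves a single one of the two.
  rcases sq_eq_one_iff.1 hε with rfl | rfl
  · subst hs hr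
    have hsδ : s * (1 - δ) * 2 = 0 := by linear_combination hB₀₀ + hB₀₁
    have hqδ : q * (1 + δ) * 2 = 0 := by linear_combination hB₀₀ - hB₀₁
    by_cases hs₀ : s = 0
    · refine ⟨q, Or.inr (Or.inl ?_)⟩
      ext i j; fin_cases i <;> fin_cases j <;> simp [kleinA, hs₀]
    · have hδ : δ = 1 := by
        linear_combination -(mul_eq_zero.1 ((mul_eq_zero.1 hsδ).resolve_right h2)).resolve_left hs₀
      have hq₀ : q = 0 := by simpa [hδ, h2, one_add_one_eq_two] using hqδ
      refine ⟨s, Or.inl ?_⟩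
      ext i j; fin_cases i <;> fin_cases j <;> simp [hq₀]
  · subst hs hr
    have hqsδ : (q - s) * (1 - δ) = 0 := by linear_combination hB₀₀
    have hqsδ' : (q + s) * (1 + δ) = 0 := by linear_combination -hB₀₁
    by_cases hqs : q - s = 0
    · refine ⟨-s, Or.inr (Or.inr (Or.inr ?_))⟩
      ext i j; fin_cases i <;> fin_cases j <;> simp [kleinA, kleinB, sub_eq_zero.1 hqs]
    · have hδ : δ = 1 := by linear_combination -(mul_eq_zero.1 hqsδ).resolve_left hqs
      have hq₀ : q = -s := by
        simpa [hδ, h2, one_add_one_eq_two, add_eq_zero_iff_eq_neg] using hqsδ'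
      refine ⟨-s, Or.inr (Or.inr (Or.inl ?_))⟩
      ext i j; fin_cases i <;> fin_cases j <;> simp [kleinB, hq₀]

namespace PGL2

theorem toPGL2_eq_toPGL2_of_val_eq_smul {M N : GL (Fin 2) K} {c : K} (h : M.val = c • N.val) :
    toPGL2 K M = toPGL2 K N := by
  have hc : c ≠ 0 := by
    rintro rfl
    simpa [h] using M.det_ne_zero
  exact (toPGL2_eq_toPGL2_iff.2 ⟨Units.mk0 c hc, h⟩).symm

theorem exists_mul_eq_smul_mul_of_commute {M N : GL (Fin 2) K}
    (h : Commute (toPGL2 K M) (toPGL2 K N)) : ∃ ε : K, M.val * N.val = ε • (N.val * M.val) := by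
  rw [Commute, SemiconjBy, ← map_mul, ← map_mul, eq_comm, toPGL2_eq_toPGL2_iff] at h
  obtain ⟨u, hu⟩ := h
  exact ⟨u, by simpa using hu⟩

theorem eq_klein_of_commute (h2 : (2 : K) ≠ 0) {A B : GL (Fin 2) K} (hA : A.val = kleinA K)
    (hB : B.val = kleinB K) {x : PGL2 K} (hxA : Commute x (toPGL2 K A))
    (hxB : Commute x (toPGL2 K B)) :
    x = 1 ∨ x = toPGL2 K A ∨ x = toPGL2 K B ∨ x = toPGL2 K (A * B) := by
  obtain ⟨M, rfl⟩ := toPGL2_surjective x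
  obtain ⟨ε, hε⟩ := exists_mul_eq_smul_mul_of_commute hxA
  obtain ⟨δ, hδ⟩ := exists_mul_eq_smul_mul_of_commute hxB
  rw [hA] at hε
  rw [hB] at hδ
  obtain ⟨c, hc | hc | hc | hc⟩ :=
    eq_smul_of_mul_kleinA_of_mul_kleinB h2 M.det_ne_zero hε hδ
  · exact Or.inl (toPGL2_eq_toPGL2_of_val_eq_smul (N := 1) hc)
  · exact Or.inr <| Or.inl <| toPGL2_eq_toPGL2_of_val_eq_smul (hc.trans (by rw [hA]))
  · exact Or.inr <| Or.inr <| Or.inl <| toPGL2_eq_toPGL2_of_val_eq_smul (hc.trans (by rw [hB]))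
  · exact Or.inr <| Or.inr <| Or.inr <| toPGL2_eq_toPGL2_of_val_eq_smul
      (hc.trans (by rw [Units.val_mul, hA, hB]))

end PGL2

end Klein

section ZModThree

open Matrix.SpecialLinearGroup (toGL)

theorem ZMod.three_units_eq_one_or_neg_one (u : (ZMod 3)ˣ) : u = 1 ∨ u = -1 := by
  revert u; decide

theorem Matrix.eq_klein_of_det_eq_one_of_mul_self (S : Matrix (Fin 2) (Fin 2) (ZMod 3))
    (hdet : S.det = 1) (hsq : S * S = 1 ∨ S * S = -1) :
    (S = 1 ∨ S = -1) ∨ (S = kleinA _ ∨ S = -kleinA _) ∨ (S = kleinB _ ∨ S = -kleinB _) ∨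
      (S = kleinA _ * kleinB _ ∨ S = -(kleinA _ * kleinB _)) := by
  revert S
  unfold kleinA kleinB
  decide

namespace PGL2

theorem toPGL2_eq_toPGL2_iff_zmod_three {M N : GL (Fin 2) (ZMod 3)} :
    toPGL2 _ M = toPGL2 _ N ↔ N.val = M.val ∨ N.val = -M.val := by
  refine ⟨fun h => ?_, toPGL2_eq_toPGL2_of_val_eq_or_eq_neg⟩
  obtain ⟨u, hu⟩ := toPGL2_eq_toPGL2_iff.1 h
  rcases ZMod.three_units_eq_one_or_neg_one u with rfl | rfl <;> simp [hu]

def slA : SpecialLinearGroup (Fin 2) (ZMod 3) := ⟨kleinA _, by decide⟩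

def slB : SpecialLinearGroup (Fin 2) (ZMod 3) := ⟨kleinB _, by decide⟩

def involA : PGL2 (ZMod 3) := toPGL2 _ (toGL slA)

def involB : PGL2 (ZMod 3) := toPGL2 _ (toGL slB)

theorem involA_mem_psl : involA ∈ psl (ZMod 3) := ⟨slA, rfl⟩

theorem involB_mem_psl : involB ∈ psl (ZMod 3) := ⟨slB, rfl⟩

theorem orderOf_involA : orderOf involA = 2 := by
  rw [involA]
  refine orderOf_eq_prime ?_ ?_ <;> rw [← map_one (toPGL2 _)]
  · rw [← map_pow, toPGL2_eq_toPGL2_iff_zmod_three]; decide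
  · rw [ne_eq, toPGL2_eq_toPGL2_iff_zmod_three]; decide

theorem orderOf_involB : orderOf involB = 2 := by
  rw [involB]
  refine orderOf_eq_prime ?_ ?_ <;> rw [← map_one (toPGL2 _)]
  · rw [← map_pow, toPGL2_eq_toPGL2_iff_zmod_three]; decide
  · rw [ne_eq, toPGL2_eq_toPGL2_iff_zmod_three]; decide

theorem involA_ne_involB : involA ≠ involB := by
  rw [involA, involB, Ne, toPGL2_eq_toPGL2_iff_zmod_three]
  decide

theorem eq_klein_of_mem_psl_of_orderOf_eq_two {x : PGL2 (ZMod 3)} (hx : x ∈ psl (ZMod 3))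
    (h2 : orderOf x = 2) : x = involA ∨ x = involB ∨ x = involA * involB := by
  obtain ⟨S, rfl⟩ := hx
  rw [MonoidHom.comp_apply] at h2 ⊢
  have hne : (toPGL2 _ 1 : PGL2 (ZMod 3)) ≠ toPGL2 _ (toGL S) := by
    rw [map_one]; rintro h; simp [← h] at h2
  have hsq : S.val * S.val = 1 ∨ S.val * S.val = -1 := by
    have := pow_orderOf_eq_one (toPGL2 _ (toGL S))
    rw [h2, ← map_pow, ← map_one (toPGL2 _), toPGL2_eq_toPGL2_iff_zmod_three, Units.val_one, sq,
      Units.val_mul] at this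
    exact this.imp Eq.symm fun h => neg_eq_iff_eq_neg.1 h.symm
  rw [involA, involB, ← map_mul]
  rcases Matrix.eq_klein_of_det_eq_one_of_mul_self S.val S.2 hsq with h | h | h | h
  · exact absurd (toPGL2_eq_toPGL2_of_val_eq_or_eq_neg h) hne
  · exact Or.inl (toPGL2_eq_toPGL2_of_val_eq_or_eq_neg (M := toGL slA) h).symm
  · exact Or.inr <| Or.inl (toPGL2_eq_toPGL2_of_val_eq_or_eq_neg (M := toGL slB) h).symm
  · exact Or.inr <| Or.inr
      (toPGL2_eq_toPGL2_of_val_eq_or_eq_neg (M := toGL slA * toGL slB) h).symm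

theorem exists_conj_eq_of_mul_eq {X Y X' Y' : GL (Fin 2) (ZMod 3)}
    (T : Matrix (Fin 2) (Fin 2) (ZMod 3)) (hT : T.det ≠ 0)
    (hX : T * X.val = X'.val * T ∨ T * X.val = -(X'.val * T))
    (hY : T * Y.val = Y'.val * T ∨ T * Y.val = -(Y'.val * T)) :
    ∃ t : PGL2 (ZMod 3), t * toPGL2 _ X * t⁻¹ = toPGL2 _ X' ∧ t * toPGL2 _ Y * t⁻¹ = toPGL2 _ Y' :=
  ⟨toPGL2 _ (GeneralLinearGroup.mkOfDetNeZero T hT), toPGL2_conj_eq_of_mul_eq hX,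
    toPGL2_conj_eq_of_mul_eq hY⟩

theorem exists_conj_eq_of_mem_klein {x y : PGL2 (ZMod 3)}
    (hx : x = involA ∨ x = involB ∨ x = involA * involB)
    (hy : y = involA ∨ y = involB ∨ y = involA * involB) (hxy : x ≠ y) :
    ∃ t : PGL2 (ZMod 3), t * involA * t⁻¹ = x ∧ t * involB * t⁻¹ = y := by
  simp only [involA, involB, ← map_mul] at hx hy ⊢
  rcases hx with rfl | rfl | rfl <;> rcases hy with rfl | rfl | rfl <;> try exact absurd rfl hxy
  · exact ⟨1, by simp⟩
  · exact exists_conj_eq_of_mul_eq !![0, 1; 1, 0] (by decide) (by decide) (by decide)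
  · exact exists_conj_eq_of_mul_eq !![0, 1; 1, 2] (by decide) (by decide) (by decide)
  · exact exists_conj_eq_of_mul_eq !![0, 1; 2, 2] (by decide) (by decide) (by decide)
  · exact exists_conj_eq_of_mul_eq !![0, 1; 2, 1] (by decide) (by decide) (by decide)
  · exact exists_conj_eq_of_mul_eq !![0, 1; 1, 1] (by decide) (by decide) (by decide)

end PGL2

end ZModThree

namespace PGL2

variable {K : Type*} [Field K]

theorem mem_range_map_of_commute_involA_involB (f : ZMod 3 →+* K) {x : PGL2 K}
    (hA : Commute x (map f involA)) (hB : Commute x (map f involB)) : x ∈ (map f).range := by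
  have h2 : (2 : K) ≠ 0 := by
    simpa only [map_ofNat, map_zero] using f.injective.ne (show (2 : ZMod 3) ≠ 0 by decide)
  rcases eq_klein_of_commute h2 (kleinA_map f) (kleinB_map f) hA hB with rfl | rfl | rfl | rfl
  · exact one_mem _
  · exact ⟨involA, rfl⟩
  · exact ⟨involB, rfl⟩
  · exact ⟨involA * involB, by rw [map_mul, map_mul]; rfl⟩

theorem normalizer_PSLsub_le_PGLsub (f : ZMod 3 →+* K) :
    Subgroup.normalizer (PSLsub f : Set (PGL2 K)) ≤ PGLsub f := by
  intro g hg
  rw [PSLsub_eq_map] at hg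
  rw [PGLsub_eq_range]
  have hι : Function.Injective (map f) := map_injective f.injective
  obtain ⟨x, hxP, hxA, hgx⟩ :=
    Subgroup.exists_conj_eq_map_of_mem_normalizer_map hι hg involA_mem_psl
  obtain ⟨y, hyP, hyB, hgy⟩ :=
    Subgroup.exists_conj_eq_map_of_mem_normalizer_map hι hg involB_mem_psl
  have hxy : x ≠ y := by
    rintro rfl
    exact involA_ne_involB (hι (mul_left_cancel (mul_right_cancel (hgx.trans hgy.symm))))
  obtain ⟨t, htx, hty⟩ := exists_conj_eq_of_mem_klein
    (eq_klein_of_mem_psl_of_orderOf_eq_two hxP (hxA.trans orderOf_involA))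
    (eq_klein_of_mem_psl_of_orderOf_eq_two hyP (hyB.trans orderOf_involB)) hxy
  have hcomm : (map f t)⁻¹ * g ∈ (map f).range := by
    refine mem_range_map_of_commute_involA_involB f (commute_inv_mul_of_conj_eq ?_)
      (commute_inv_mul_of_conj_eq ?_)
    · rw [hgx, ← htx, map_mul, map_mul, map_inv]
    · rw [hgy, ← hty, map_mul, map_mul, map_inv]
  simpa using mul_mem (⟨t, rfl⟩ : map f t ∈ (map f).range) hcomm

end PGL2

/-- The normalizer in `PGL₂(k)` (`k` an algebraic closure of `𝔽₃`) of `PSL₂(𝔽₃)` is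
`PGL₂(𝔽₃)`. -/
theorem normalizer_psl_three :
    Subgroup.normalizer (PSLsub (algebraMap (ZMod 3) (AlgebraicClosure (ZMod 3))) :
        Set (PGL2 (AlgebraicClosure (ZMod 3)))) =
      PGLsub (algebraMap (ZMod 3) (AlgebraicClosure (ZMod 3))) :=
  le_antisymm (PGL2.normalizer_PSLsub_le_PGLsub _) (PGL2.PGLsub_le_normalizer_PSLsub _)
end
end

section
/- Let k be an algebraic closure of F_5. The normalizer in PGL_2(k) of the subgroup PSL_2(F_5) (embedded via the inclusion F_5 ↪ k) is equal to PGL_2(F_5) (embedded via the same inclusion). -/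
open Matrix

noncomputable section

instance : Fact (Nat.Prime 5) := ⟨by norm_num⟩

/-!
Nothing specific to `𝔽₅` is used: both inclusions hold for any embedding of fields `F → k`.
`PSL₂(F)` is the image of the normal subgroup `SL₂(F)` of `GL₂(F)`, so `PGL₂(F)` normalizes it.
Conversely, let `g ∈ GL₂(k)` normalize `PSL₂(F)` and let `t ∈ SL₂(F)` be a nontrivial unipotent.
Then `g t g⁻¹ = c s` with `s ∈ SL₂(F)` and `c² = 1`, so `g t g⁻¹` is again a nontrivial unipotent
defined over `F`; its fixed line is therefore `F`-rational, and `g` maps the fixed line of `t`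
onto it. Applying this to unipotents fixing the lines through `(1, 0)`, `(0, 1)` and `(1, 1)`
shows that `g` maps three `F`-rational points of `ℙ¹` in general position to `F`-rational points,
which forces `g` to be a scalar multiple of a matrix over `F`.
-/

namespace Matrix.SpecialLinearGroup

variable {n R : Type*} [Fintype n] [DecidableEq n] [CommRing R]

theorem range_toGL_eq_ker_det :
    (toGL : SpecialLinearGroup n R →* GL n R).range = GeneralLinearGroup.det.ker :=
  SetLike.coe_injective range_toGL

instance normal_range_toGL : (toGL : SpecialLinearGroup n R →* GL n R).range.Normal := by
  rw [range_toGL_eq_ker_det]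
  infer_instance

end Matrix.SpecialLinearGroup

theorem PGLsub_le_normalizer_PSLsub {R k : Type*} [CommRing R] [CommRing k] (f : R →+* k) :
    PGLsub f ≤ Subgroup.normalizer (PSLsub f : Set (PGL2 k)) := by
  have hPSL : PSLsub f =
      SpecialLinearGroup.toGL.range.map ((toPGL2 k).comp (GeneralLinearGroup.map f)) := by
    rw [MonoidHom.map_range]
    rfl
  rw [hPSL, PGLsub, MonoidHom.range_eq_map,
    ← Subgroup.normalizer_eq_top (H := SpecialLinearGroup.toGL.range)]
  exact Subgroup.le_normalizer_map _

section CommRings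

variable {R k : Type*} [CommRing R] [CommRing k] (f : R →+* k)

theorem exists_mul_eq_smul_mul_of_conj_mem_PSLsub (g : GL (Fin 2) k)
    (t : SpecialLinearGroup (Fin 2) R)
    (h : toPGL2 k g * toPGL2 k (GeneralLinearGroup.map f (SpecialLinearGroup.toGL t)) *
      (toPGL2 k g)⁻¹ ∈ PSLsub f) :
    ∃ (s : SpecialLinearGroup (Fin 2) R) (c : k),
      (g : Matrix (Fin 2) (Fin 2) k) * f.mapMatrix (t : Matrix (Fin 2) (Fin 2) R) =
        c • f.mapMatrix (s : Matrix (Fin 2) (Fin 2) R) * g := by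
  obtain ⟨s, hs⟩ := h
  rw [← map_inv, ← map_mul, ← map_mul] at hs
  obtain ⟨z, hz, hsz⟩ := (QuotientGroup.mk'_eq_mk' _).1 hs
  rw [GeneralLinearGroup.center_eq_range_scalar] at hz
  obtain ⟨c, rfl⟩ := hz
  refine ⟨s, c, ?_⟩
  have := congrArg (fun x : GL (Fin 2) k => (x : Matrix (Fin 2) (Fin 2) k) * g) hsz
  simpa [mul_assoc, ← smul_eq_diagonal_mul, smul_mul_assoc] using this.symm

theorem exists_mul_eq_mapMatrix_mul_of_conj_mem_PSLsub [IsDomain k] (g : GL (Fin 2) k)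
    (t : SpecialLinearGroup (Fin 2) R)
    (h : toPGL2 k g * toPGL2 k (GeneralLinearGroup.map f (SpecialLinearGroup.toGL t)) *
      (toPGL2 k g)⁻¹ ∈ PSLsub f) :
    ∃ T : Matrix (Fin 2) (Fin 2) R,
      (g : Matrix (Fin 2) (Fin 2) k) * f.mapMatrix (t : Matrix (Fin 2) (Fin 2) R) =
        f.mapMatrix T * g := by
  obtain ⟨s, c, hsc⟩ := exists_mul_eq_smul_mul_of_conj_mem_PSLsub f g t h
  have hc : c * c = 1 := by
    have hdet := congrArg det hsc
    rw [det_mul, det_mul, det_smul, ← RingHom.map_det, ← RingHom.map_det, t.2, s.2, map_one,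
      mul_one, mul_one, Fintype.card_fin, mul_comm, pow_two] at hdet
    exact ((isUnits_det_units g).mul_left_cancel (hdet.symm.trans (mul_one _).symm))
  rcases mul_self_eq_one_iff.1 hc with rfl | rfl
  · exact ⟨s, by rw [hsc, one_smul]⟩
  · exact ⟨-s, by rw [hsc, neg_one_smul, ← map_neg]⟩

end CommRings

theorem RingHom.mapMatrix_injective {n F k : Type*} [Fintype n] [DecidableEq n] [Field F] [Ring k]
    [Nontrivial k] (f : F →+* k) : Function.Injective (f.mapMatrix : Matrix n n F → _) :=
  Matrix.map_injective f.injective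

theorem RingHom.mapMatrix_mulVec_comp {n F k : Type*} [Fintype n] [DecidableEq n] [CommRing F]
    [CommRing k] (f : F →+* k) (M : Matrix n n F) (v : n → F) :
    f.mapMatrix M *ᵥ (f ∘ v) = f ∘ (M *ᵥ v) :=
  funext fun i => (f.map_mulVec M v i).symm

namespace Matrix

theorem det_sub_one_eq_zero {R : Type*} [CommRing R] {T : Matrix (Fin 2) (Fin 2) R}
    (hdet : T.det = 1) (htr : T.trace = 2) : (T - 1).det = 0 := by
  rw [det_fin_two] at hdet ⊢
  rw [trace_fin_two] at htr
  simp only [sub_apply, one_apply_eq, one_apply_ne zero_ne_one, one_apply_ne one_ne_zero]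
  linear_combination hdet - htr

theorem exists_eq_smul_of_mulVec_eq_zero {K : Type*} [Field K]
    {B : Matrix (Fin 2) (Fin 2) K} (hB : B ≠ 0) {v w : Fin 2 → K} (hv : v ≠ 0)
    (hBv : B *ᵥ v = 0) (hBw : B *ᵥ w = 0) : ∃ d : K, w = d • v := by
  have hdet : (of ![v, w]).det = 0 := by
    by_contra h
    have hBP : B * (of ![v, w])ᵀ = 0 := by
      ext i j
      fin_cases j
      · simpa [mul_apply, mulVec, dotProduct] using congrFun hBv i
      · simpa [mul_apply, mulVec, dotProduct] using congrFun hBw i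
    refine hB ?_
    rw [← mul_nonsing_inv_cancel_right (of ![v, w])ᵀ B (by simpa using h), hBP, zero_mul]
  obtain ⟨x, hx0, hx⟩ := exists_vecMul_eq_zero_iff.mpr hdet
  have hx' : x 0 • v + x 1 • w = 0 := by
    ext i
    fin_cases i <;> simpa [vecMul, dotProduct, Fin.sum_univ_two] using congrFun hx _
  have hx1 : x 1 ≠ 0 := by
    intro h1
    rw [h1, zero_smul, add_zero, smul_eq_zero] at hx'
    exact hx0 (by ext i; fin_cases i <;> simp [h1, hx'.resolve_right hv])
  refine ⟨-(x 0 / x 1), ?_⟩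
  rw [← smul_right_inj hx1, smul_smul, mul_neg, mul_div_cancel₀ _ hx1, neg_smul,
    eq_neg_iff_add_eq_zero, add_comm, hx']

end Matrix

section Fields

variable {F k : Type*} [Field F] [Field k] (f : F →+* k)

theorem exists_mulVec_eq_smul_of_conj_unipotent {A : Matrix (Fin 2) (Fin 2) k} (hA : IsUnit A)
    {t T : Matrix (Fin 2) (Fin 2) F} (hdet : t.det = 1) (htr : t.trace = 2) (ht : t ≠ 1)
    (hconj : A * f.mapMatrix t = f.mapMatrix T * A) {e : Fin 2 → F} (he : t *ᵥ e = e) :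
    ∃ (d : k) (v : Fin 2 → F), A *ᵥ (f ∘ e) = d • (f ∘ v) := by
  have hT : f.mapMatrix T = A * f.mapMatrix t * A⁻¹ := by
    rw [hconj, mul_nonsing_inv_cancel_right _ _ ((isUnit_iff_isUnit_det A).1 hA)]
  have hTdet : T.det = 1 := f.injective <| by
    rw [RingHom.map_det, hT, det_conj hA, ← RingHom.map_det, hdet]
  have hTtr : T.trace = 2 := f.injective <| by
    rw [← htr, AddMonoidHom.map_trace, AddMonoidHom.map_trace]
    exact (congrArg trace hT).trans (trace_conj hA _)
  have hT1 : T - 1 ≠ 0 := by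
    refine sub_ne_zero.2 fun h => ht (f.mapMatrix_injective ?_)
    exact hA.mul_left_cancel (by rw [hconj, h, map_one, one_mul, mul_one])
  obtain ⟨v, hv, hTv⟩ := exists_mulVec_eq_zero_iff.2 (det_sub_one_eq_zero hTdet hTtr)
  have hB : f.mapMatrix (T - 1) ≠ 0 := by
    rwa [← map_zero f.mapMatrix, f.mapMatrix_injective.ne_iff]
  have hBv : f.mapMatrix (T - 1) *ᵥ (f ∘ v) = 0 := by
    rw [RingHom.mapMatrix_mulVec_comp, hTv]
    exact funext fun _ => map_zero f
  have hBAe : f.mapMatrix (T - 1) *ᵥ (A *ᵥ (f ∘ e)) = 0 := by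
    rw [map_sub, map_one, sub_mulVec, mulVec_mulVec, ← hconj, ← mulVec_mulVec,
      RingHom.mapMatrix_mulVec_comp, he, one_mulVec, sub_self]
  obtain ⟨d, hd⟩ := exists_eq_smul_of_mulVec_eq_zero hB (by simpa [funext_iff] using hv) hBv hBAe
  exact ⟨d, v, hd⟩

theorem exists_eq_smul_mapMatrix_of_mulVec_eq_smul {A : Matrix (Fin 2) (Fin 2) k} (hA : A.det ≠ 0)
    {a b c : k} {u v w : Fin 2 → F}
    (hu : A *ᵥ ![1, 0] = a • (f ∘ u)) (hv : A *ᵥ ![0, 1] = b • (f ∘ v))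
    (hw : A *ᵥ ![1, 1] = c • (f ∘ w)) :
    ∃ M : Matrix (Fin 2) (Fin 2) F, A = c • f.mapMatrix M := by
  set Q : Matrix (Fin 2) (Fin 2) F := (of ![u, v])ᵀ with hQ
  have hAQ : A = f.mapMatrix Q * diagonal ![a, b] := by
    ext i j
    fin_cases j
    · simpa [hQ, mulVec, dotProduct, mul_comm] using congrFun hu i
    · simpa [hQ, mulVec, dotProduct, mul_comm] using congrFun hv i
  have hQk : (f.mapMatrix Q).det ≠ 0 := by
    rw [hAQ, det_mul] at hA
    exact left_ne_zero_of_mul hA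
  have hQunit : IsUnit Q.det := by
    rw [← RingHom.map_det] at hQk
    exact (ne_zero_of_map hQk).isUnit
  set x := Q⁻¹ *ᵥ w
  have hx : Q *ᵥ x = w := by rw [mulVec_mulVec, mul_nonsing_inv Q hQunit, one_mulVec]
  -- `(a, b)` are the coordinates of `A *ᵥ ![1, 1] = c • (f ∘ w)` in the basis `f ∘ u, f ∘ v`.
  have hab : ![a, b] = c • (f ∘ x) := by
    refine mulVec_injective_of_det_ne_zero hQk ?_
    rw [mulVec_smul, RingHom.mapMatrix_mulVec_comp, hx, ← hw, hAQ, ← mulVec_mulVec]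
    congr 1
    ext i; fin_cases i <;> simp
  refine ⟨Q * diagonal x, ?_⟩
  rw [hAQ, hab, map_mul, RingHom.mapMatrix_apply (M := diagonal x), diagonal_map (map_zero f),
    diagonal_smul, mul_smul_comm]
  rfl

theorem toPGL2_mem_PGLsub_of_coe_eq_smul (g : GL (Fin 2) k) {c : k} {M : Matrix (Fin 2) (Fin 2) F}
    (h : (g : Matrix (Fin 2) (Fin 2) k) = c • f.mapMatrix M) : toPGL2 k g ∈ PGLsub f := by
  have hdet : c ^ 2 * f M.det ≠ 0 := by
    simpa [h, det_smul, RingHom.map_det] using (isUnits_det_units g).ne_zero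
  have hc : c ≠ 0 := by
    rintro rfl
    simp at hdet
  have hM : IsUnit M :=
    (isUnit_iff_isUnit_det M).2 (ne_zero_of_map (right_ne_zero_of_mul hdet)).isUnit
  refine ⟨hM.unit, (QuotientGroup.mk'_eq_mk' _).2
    ⟨GeneralLinearGroup.scalar _ (Units.mk0 c hc), ?_, ?_⟩⟩
  · rw [GeneralLinearGroup.center_eq_range_scalar]
    exact ⟨_, rfl⟩
  · ext : 1
    simp [h, smul_eq_mul_diagonal]

theorem exists_mulVec_eq_smul_of_mem_normalizer {g : GL (Fin 2) k}
    (hg : toPGL2 k g ∈ Subgroup.normalizer (PSLsub f : Set (PGL2 k)))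
    {t : SpecialLinearGroup (Fin 2) F} (htr : (t : Matrix (Fin 2) (Fin 2) F).trace = 2)
    (ht : (t : Matrix (Fin 2) (Fin 2) F) ≠ 1) {e : Fin 2 → F}
    (he : (t : Matrix (Fin 2) (Fin 2) F) *ᵥ e = e) :
    ∃ (d : k) (v : Fin 2 → F), (g : Matrix (Fin 2) (Fin 2) k) *ᵥ (f ∘ e) = d • (f ∘ v) := by
  obtain ⟨T, hT⟩ := exists_mul_eq_mapMatrix_mul_of_conj_mem_PSLsub f g t
    ((Subgroup.mem_normalizer_iff.1 hg _).1 ⟨t, rfl⟩)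
  exact exists_mulVec_eq_smul_of_conj_unipotent f g.isUnit t.2 htr ht hT he

theorem normalizer_PSLsub_le_PGLsub :
    Subgroup.normalizer (PSLsub f : Set (PGL2 k)) ≤ PGLsub f := by
  intro x hx
  obtain ⟨g, rfl⟩ := QuotientGroup.mk'_surjective _ x
  obtain ⟨a, u, hu⟩ := exists_mulVec_eq_smul_of_mem_normalizer f hx
    (t := ⟨!![1, 1; 0, 1], by simp⟩) (by norm_num) (by simp [← ext_iff]) (e := ![1, 0])
    (by ext i; fin_cases i <;> norm_num)
  obtain ⟨b, v, hv⟩ := exists_mulVec_eq_smul_of_mem_normalizer f hx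
    (t := ⟨!![1, 0; 1, 1], by simp⟩) (by norm_num) (by simp [← ext_iff]) (e := ![0, 1])
    (by ext i; fin_cases i <;> norm_num)
  obtain ⟨c, w, hw⟩ := exists_mulVec_eq_smul_of_mem_normalizer f hx
    (t := ⟨!![0, 1; -1, 2], by simp⟩) (by norm_num) (by simp [← ext_iff]) (e := ![1, 1])
    (by ext i; fin_cases i <;> norm_num)
  obtain ⟨M, hM⟩ := exists_eq_smul_mapMatrix_of_mulVec_eq_smul f (isUnits_det_units g).ne_zero
    (by simpa using hu) (by simpa using hv) (by simpa using hw)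
  exact toPGL2_mem_PGLsub_of_coe_eq_smul f g hM

end Fields

/-- The normalizer in `PGL₂(k)` (`k` an algebraic closure of `𝔽₅`) of `PSL₂(𝔽₅)` is
`PGL₂(𝔽₅)`. -/
theorem normalizer_psl_five :
    Subgroup.normalizer (PSLsub (algebraMap (ZMod 5) (AlgebraicClosure (ZMod 5))) : Set (PGL2 (AlgebraicClosure (ZMod 5)))) =
      PGLsub (algebraMap (ZMod 5) (AlgebraicClosure (ZMod 5))) :=
  le_antisymm (normalizer_PSLsub_le_PGLsub _) (PGLsub_le_normalizer_PSLsub _)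
end
end

section
/- Let k be an algebraic closure of F_5, let G be a subgroup of PGL_2(k), and let N be a normal subgroup of G such that the quotient G/N is abelian. Then N is conjugate in PGL_2(k) to PSL_2(F_5) or to PGL_2(F_5) if and only if G is conjugate in PGL_2(k) to PSL_2(F_5) or to PGL_2(F_5). -/
open Matrix

noncomputable section

/-!
Write `P` and `Q` for the images of `SL₂(𝔽₅)` and `GL₂(𝔽₅)` in `PGL₂(k)`. Four facts decide
everything: `P` is perfect, `⁅Q, Q⁆ = P`, nothing lies strictly between `P` and `Q` (the quotient
is determinants modulo squares), and the normalizer of `P` in `PGL₂(k)` is `Q`. For the last one,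
an element normalizing `P` conjugates each matrix of `SL₂(𝔽₅)` to plus or minus another one; as
these matrices span `M₂(𝔽₅)`, it conjugates `M₂(𝔽₅)` into itself, by Skolem–Noether it acts there
as some `h ∈ GL₂(𝔽₅)`, and then it differs from `h` by a scalar.
After conjugating, `N ≤ G`, `G` normalizes `N` and `⁅G, G⁆ ≤ N`, and these four facts force
`N ∈ {P, Q} ↔ G ∈ {P, Q}`.
-/

theorem FiniteField.isSquare_mul_of_not_isSquare {F : Type*} [Field F] [Fintype F]
    {a b : F} (ha : ¬IsSquare a) (hb : ¬IsSquare b) : IsSquare (a * b) := by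
  classical
  have ha0 : a ≠ 0 := by rintro rfl; exact ha IsSquare.zero
  have hb0 : b ≠ 0 := by rintro rfl; exact hb IsSquare.zero
  rw [← quadraticChar_one_iff_isSquare (mul_ne_zero ha0 hb0), map_mul,
    quadraticChar_neg_one_iff_not_isSquare.2 ha, quadraticChar_neg_one_iff_not_isSquare.2 hb]
  norm_num

namespace Matrix

variable {n F : Type*} [Fintype n] [DecidableEq n] [Field F]

lemma algHom_single_mul_single (φ : Matrix n n F →ₐ[F] Matrix n n F) (i j i' j' : n) :
    φ (single i j 1) * φ (single i' j' 1) = if j = i' then φ (single i j' 1) else 0 := by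
  rw [← map_mul]
  split_ifs with h
  · rw [h, single_mul_single_same, one_mul]
  · rw [single_mul_single_of_ne (h := h), map_zero]

lemma algHom_single_ne_zero [Nonempty n] (φ : Matrix n n F →ₐ[F] Matrix n n F) (i₀ : n) :
    φ (single i₀ i₀ 1) ≠ 0 := by
  intro h
  have he (i j : n) : φ (single i j 1) = 0 := by
    have h₁ := algHom_single_mul_single φ i i₀ i₀ j
    have h₂ := algHom_single_mul_single φ i i₀ i₀ i₀
    rw [if_pos rfl] at h₁ h₂
    rw [← h₁, ← h₂, h, mul_zero, zero_mul]
  apply one_ne_zero (α := Matrix n n F)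
  rw [← map_one φ, ← sum_single_one, map_sum]
  exact Finset.sum_eq_zero fun i _ => he i i

theorem exists_eq_conj_of_algHom [Nonempty n] (φ : Matrix n n F →ₐ[F] Matrix n n F) :
    ∃ P : GL n F, ∀ A, φ A = P * A * P⁻¹ := by
  obtain ⟨i₀⟩ := ‹Nonempty n›
  set e : n → n → Matrix n n F := fun i j => φ (single i j 1)
  have he_mul : ∀ i j i' j', e i j * e i' j' = if j = i' then e i j' else 0 :=
    algHom_single_mul_single φ
  have he₀ : e i₀ i₀ ≠ 0 := algHom_single_ne_zero φ i₀
  obtain ⟨w, hw⟩ : ∃ w, e i₀ i₀ *ᵥ w ≠ 0 := by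
    by_contra! h
    exact he₀ (ext_iff_mulVec.2 fun w => by simpa using h w)
  set v := e i₀ i₀ *ᵥ w
  have hv : e i₀ i₀ *ᵥ v = v := by simp [v, mulVec_mulVec, he_mul]
  obtain ⟨p, hp⟩ : ∃ p, v p ≠ 0 := Function.ne_iff.1 hw
  -- `φ` permutes the vectors `e q i₀ v` as the matrix units permute the standard basis, so the
  -- matrix `P` with these columns intertwines `φ` with the identity; `Q` is its inverse.
  set P : Matrix n n F := of fun p q => (e q i₀ *ᵥ v) p
  set u : n → F := Pi.single p (v p)⁻¹
  set Q : Matrix n n F := of fun q p => (u ᵥ* e i₀ q) p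
  have hQP : Q * P = 1 := by
    ext q q'
    have huv : u ⬝ᵥ v = 1 := by simp [u, hp]
    change (u ᵥ* e i₀ q) ⬝ᵥ (e q' i₀ *ᵥ v) = _
    rw [← dotProduct_mulVec, mulVec_mulVec, he_mul, one_apply]
    split_ifs <;> simp_all
  have hPQ : P * Q = 1 := mul_eq_one_comm.1 hQP
  have hφP (A : Matrix n n F) : φ A * P = P * A := by
    induction A using Matrix.induction_on' with
    | h_zero => simp
    | h_add A B hA hB => rw [map_add, add_mul, mul_add, hA, hB]
    | h_std_basis i j c =>
      rw [show single i j c = c • single i j 1 by rw [smul_single, smul_eq_mul, mul_one],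
        map_smul, smul_mul_assoc, mul_smul_comm]
      congr 1
      ext p q
      have : (e i j * P) p q = ((e i j * e q i₀) *ᵥ v) p := by
        rw [← mulVec_mulVec]
        rfl
      rw [this, he_mul]
      obtain rfl | hqj := eq_or_ne q j
      · simp [P]
      · simp [mul_single_apply_of_ne (hbj := hqj), hqj.symm]
  refine ⟨⟨P, Q, hPQ, hQP⟩, fun A => ?_⟩
  rw [Units.val_mk, Units.inv_mk, ← hφP, mul_assoc, hPQ, mul_one]

end Matrix

theorem Matrix.SpecialLinearGroup.span_range_coe_eq_top {F : Type*} [Field F] {a : F} (ha : a ≠ 0)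
    (hasq : a ^ 2 ≠ 1) :
    Submodule.span F (Set.range ((↑) : SpecialLinearGroup (Fin 2) F → Matrix (Fin 2) (Fin 2) F)) =
      ⊤ := by
  set V := Submodule.span F
    (Set.range ((↑) : SpecialLinearGroup (Fin 2) F → Matrix (Fin 2) (Fin 2) F))
  have hS (S : SpecialLinearGroup (Fin 2) F) : (S : Matrix (Fin 2) (Fin 2) F) ∈ V :=
    Submodule.subset_span ⟨S, rfl⟩
  have h01 : single (0 : Fin 2) (1 : Fin 2) (1 : F) ∈ V := by
    simpa [transvection_coe] using V.sub_mem (hS (transvection zero_ne_one 1)) (hS 1)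
  have h10 : single (1 : Fin 2) (0 : Fin 2) (1 : F) ∈ V := by
    simpa [transvection_coe] using V.sub_mem (hS (transvection one_ne_zero 1)) (hS 1)
  have h00 : single (0 : Fin 2) (0 : Fin 2) (1 : F) ∈ V := by
    have haa : a - a⁻¹ ≠ 0 := by
      rw [sub_ne_zero]
      intro h
      field_simp at h
      exact hasq h
    have : single (0 : Fin 2) (0 : Fin 2) (1 : F) =
        (a - a⁻¹)⁻¹ • ((diag2 a ha : Matrix (Fin 2) (Fin 2) F) - a⁻¹ • 1) := by
      ext i j
      fin_cases i <;> fin_cases j <;> simp [diag2_coe', haa]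
    rw [this]
    exact V.smul_mem _ (V.sub_mem (hS _) (V.smul_mem _ (hS 1)))
  have h11 : single (1 : Fin 2) (1 : Fin 2) (1 : F) ∈ V := by
    have : single (1 : Fin 2) (1 : Fin 2) (1 : F) = 1 - single 0 0 1 := by
      ext i j
      fin_cases i <;> fin_cases j <;> simp
    rw [this]
    exact V.sub_mem (hS 1) h00
  refine eq_top_iff.2 fun A _ => ?_
  rw [matrix_eq_sum_single A]
  refine V.sum_mem fun i _ => V.sum_mem fun j _ => ?_
  rw [show single i j (A i j) = A i j • single i j 1 by rw [smul_single, smul_eq_mul, mul_one]]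
  refine V.smul_mem _ ?_
  fin_cases i <;> fin_cases j
  exacts [h00, h01, h10, h11]

namespace Matrix.GeneralLinearGroup

variable {n F k : Type*} [Fintype n] [DecidableEq n] [Field F] [Field k] (f : F →+* k)

theorem exists_conj_map_eq_map_of_span_eq_top {s : Set (Matrix n n F)}
    (hs : Submodule.span F s = ⊤) {g : GL n k}
    (hg : ∀ A ∈ s, ∃ B : Matrix n n F, g * A.map f * (g⁻¹ : GL n k) = B.map f) (A : Matrix n n F) :
    ∃ B : Matrix n n F, g * A.map f * (g⁻¹ : GL n k) = B.map f := by
  induction (hs ▸ Submodule.mem_top : A ∈ Submodule.span F s) using Submodule.span_induction with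
  | mem A hA => exact hg A hA
  | zero => exact ⟨0, by simp⟩
  | add A B _ _ hA hB =>
    obtain ⟨A', hA'⟩ := hA
    obtain ⟨B', hB'⟩ := hB
    refine ⟨A' + B', ?_⟩
    rw [Matrix.map_add _ (map_add f), Matrix.map_add _ (map_add f), mul_add, add_mul, hA', hB']
  | smul c A _ hA =>
    obtain ⟨A', hA'⟩ := hA
    refine ⟨c • A', ?_⟩
    rw [map_smul' _ _ _ (map_mul f), map_smul' _ _ _ (map_mul f), mul_smul_comm, smul_mul_assoc,
      hA']

theorem exists_map_inv_mul_mem_center [Nonempty n] (g : GL n k)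
    (hg : ∀ A : Matrix n n F, ∃ B : Matrix n n F, g * A.map f * (g⁻¹ : GL n k) = B.map f) :
    ∃ P : GL n F, (map f P)⁻¹ * g ∈ Subgroup.center (GL n k) := by
  choose φ hφ using hg
  have inj : Function.Injective fun B : Matrix n n F => B.map f := map_injective f.injective
  let ψ : Matrix n n F →ₐ[F] Matrix n n F :=
    { toFun := φ
      map_one' := inj <| by simp [← hφ]
      map_mul' := fun A B => inj <| by simp [← hφ, Matrix.map_mul, mul_assoc]
      map_zero' := inj <| by simp [← hφ]
      map_add' := fun A B => inj <| by simp [← hφ, Matrix.map_add, mul_add, add_mul]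
      commutes' := fun c => inj <| by
        have hc : (algebraMap F (Matrix n n F) c).map f = Matrix.scalar n (f c) := by
          simp [algebraMap_eq_diagonal, diagonal_map]
        simp only [← hφ, hc, ← (Matrix.scalar_commute (f c) (fun _ => Commute.all _ _) _).eq,
          mul_assoc, Units.mul_inv, mul_one] }
  obtain ⟨P, hP⟩ : ∃ P : GL n F, ∀ A, φ A = P * A * P⁻¹ := exists_eq_conj_of_algHom ψ
  refine ⟨P, mem_center_iff_val_mem_range_scalar.2 (mem_range_scalar_of_commute_single ?_)⟩
  intro i j _
  set Q := map f P
  have h : (g : Matrix n n k) * single i j 1 * ((g⁻¹ : GL n k) : Matrix n n k) =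
      (Q : Matrix n n k) * single i j 1 * ((Q⁻¹ : GL n k) : Matrix n n k) := by
    have := hφ (single i j 1)
    rwa [hP, Matrix.map_mul, Matrix.map_mul, map_single, map_one] at this
  calc single i j 1 * ((Q⁻¹ * g : GL n k) : Matrix n n k)
      = ((Q⁻¹ : GL n k) : Matrix n n k) *
          ((Q : Matrix n n k) * single i j 1 * ((Q⁻¹ : GL n k) : Matrix n n k)) *
          (g : Matrix n n k) := by
        simp [mul_assoc]
    _ = ((Q⁻¹ : GL n k) : Matrix n n k) *
          ((g : Matrix n n k) * single i j 1 * ((g⁻¹ : GL n k) : Matrix n n k)) *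
          (g : Matrix n n k) := by
        rw [h]
    _ = ((Q⁻¹ * g : GL n k) : Matrix n n k) * single i j 1 := by
        simp [mul_assoc]

end Matrix.GeneralLinearGroup

lemma toPGL2_eq_toPGL2_iff {K : Type*} [CommRing K] {x y : GL (Fin 2) K} :
    toPGL2 K x = toPGL2 K y ↔ ∃ u : Kˣ, x * GeneralLinearGroup.scalar (Fin 2) u = y := by
  rw [toPGL2, QuotientGroup.mk'_eq_mk', GeneralLinearGroup.center_eq_range_scalar]
  simp

lemma val_eq_or_eq_neg_of_toPGL2_eq {K : Type*} [Field K] {x y : GL (Fin 2) K}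
    (h : toPGL2 K x = toPGL2 K y)
    (hdet : (x : Matrix (Fin 2) (Fin 2) K).det = (y : Matrix (Fin 2) (Fin 2) K).det) :
    (y : Matrix (Fin 2) (Fin 2) K) = x ∨ (y : Matrix (Fin 2) (Fin 2) K) = -x := by
  obtain ⟨u, rfl⟩ := toPGL2_eq_toPGL2_iff.1 h
  have hu : (u : K) * u = 1 := by
    have hx : (x : Matrix (Fin 2) (Fin 2) K).det ≠ 0 := (Matrix.isUnits_det_units x).ne_zero
    have hs : (scalar (Fin 2) (u : K)).det = u * u := by simp [sq]
    rw [Units.val_mul, GeneralLinearGroup.coe_scalar, det_mul, hs] at hdet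
    exact (mul_eq_left₀ hx).1 hdet.symm
  rcases mul_self_eq_one_iff.1 hu with hu | hu
  · simp [hu]
  · simp [hu, ← Matrix.smul_one_eq_diagonal]

section Subgroups

variable {R k : Type*} [CommRing R] [CommRing k] (f : R →+* k)

lemma PSLsub_le_PGLsub : PSLsub f ≤ PGLsub f := by
  rintro _ ⟨S, rfl⟩
  exact ⟨SpecialLinearGroup.toGL S, rfl⟩

lemma commutator_PGLsub_le : ⁅PGLsub f, PGLsub f⁆ ≤ PSLsub f := by
  have hdet :
      commutator (GL (Fin 2) R) ≤ (SpecialLinearGroup.toGL (n := Fin 2) (R := R)).range := by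
    intro g hg
    have h1 := Abelianization.commutator_subset_ker GeneralLinearGroup.det hg
    exact ⟨⟨g, by simpa [Units.ext_iff] using h1⟩, Units.ext rfl⟩
  rw [PGLsub, PSLsub, MonoidHom.range_eq_map, ← Subgroup.map_commutator, ← MonoidHom.comp_assoc,
    MonoidHom.range_comp]
  exact Subgroup.map_mono hdet

lemma commutator_PSLsub [Group.IsPerfect (SpecialLinearGroup (Fin 2) R)] :
    ⁅PSLsub f, PSLsub f⁆ = PSLsub f :=
  Subgroup.isPerfect_iff.1 (Group.IsPerfect.range _)

lemma commutator_PGLsub [Group.IsPerfect (SpecialLinearGroup (Fin 2) R)] :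
    ⁅PGLsub f, PGLsub f⁆ = PSLsub f :=
  (commutator_PGLsub_le f).antisymm <| commutator_PSLsub f ▸
    Subgroup.commutator_mono (PSLsub_le_PGLsub f) (PSLsub_le_PGLsub f)

end Subgroups

section Squares

variable {F k : Type*} [Field F] [CommRing k] (f : F →+* k)

lemma toPGL2_map_mem_PSLsub_of_isSquare_det (B : GL (Fin 2) F)
    (hB : IsSquare (B : Matrix (Fin 2) (Fin 2) F).det) :
    toPGL2 k (GeneralLinearGroup.map f B) ∈ PSLsub f := by
  obtain ⟨r, hr⟩ := hB
  have hr0 : r ≠ 0 := by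
    rintro rfl
    exact (Matrix.isUnits_det_units B).ne_zero (by simpa using hr)
  set u := Units.mk0 r hr0
  let S : SpecialLinearGroup (Fin 2) F := ⟨↑(B * GeneralLinearGroup.scalar (Fin 2) u⁻¹), by
    simp [hr, u, sq]
    field_simp⟩
  have hS : SpecialLinearGroup.toGL S = B * GeneralLinearGroup.scalar (Fin 2) u⁻¹ := Units.ext rfl
  refine ⟨S, toPGL2_eq_toPGL2_iff.2 ⟨Units.map f u, ?_⟩⟩
  simp only [MonoidHom.comp_apply, hS, ← GeneralLinearGroup.map_scalar, ← map_mul, mul_assoc,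
    inv_mul_cancel, map_one, mul_one]

lemma eq_PSLsub_or_eq_PGLsub_of_le [Fintype F] {H : Subgroup (PGL2 k)} (h₁ : PSLsub f ≤ H)
    (h₂ : H ≤ PGLsub f) : H = PSLsub f ∨ H = PGLsub f := by
  by_cases hH : H ≤ PSLsub f
  · exact .inl (le_antisymm hH h₁)
  obtain ⟨_, hxH, hx⟩ := SetLike.not_le_iff_exists.1 hH
  obtain ⟨A, rfl⟩ := h₂ hxH
  have hA : ¬IsSquare (A : Matrix (Fin 2) (Fin 2) F).det :=
    mt (toPGL2_map_mem_PSLsub_of_isSquare_det f A) hx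
  refine .inr (le_antisymm h₂ ?_)
  rintro _ ⟨B, rfl⟩
  by_cases hB : IsSquare (B : Matrix (Fin 2) (Fin 2) F).det
  · exact h₁ (toPGL2_map_mem_PSLsub_of_isSquare_det f B hB)
  have hAB : IsSquare ((A⁻¹ * B : GL (Fin 2) F) : Matrix (Fin 2) (Fin 2) F).det := by
    rw [Units.val_mul, det_mul, coe_units_inv, det_nonsing_inv, Ring.inverse_eq_inv']
    exact FiniteField.isSquare_mul_of_not_isSquare (by rwa [isSquare_inv]) hB
  simpa using H.mul_mem hxH (h₁ (toPGL2_map_mem_PSLsub_of_isSquare_det f _ hAB))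

end Squares

theorem normalizer_PSLsub_le {F k : Type*} [Field F] [Field k] (f : F →+* k) {a : F} (ha : a ≠ 0)
    (hasq : a ^ 2 ≠ 1) : Subgroup.normalizer (PSLsub f : Set (PGL2 k)) ≤ PGLsub f := by
  intro x hx
  obtain ⟨g, rfl⟩ := QuotientGroup.mk'_surjective _ x
  have hSL : ∀ A ∈ Set.range ((↑) : SpecialLinearGroup (Fin 2) F → Matrix (Fin 2) (Fin 2) F),
      ∃ B : Matrix (Fin 2) (Fin 2) F, g * A.map f * (g⁻¹ : GL (Fin 2) k) = B.map f := by
    rintro _ ⟨(S : SpecialLinearGroup (Fin 2) F), rfl⟩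
    obtain ⟨S', hS'⟩ := (Subgroup.mem_normalizer_iff.1 hx _).1 ⟨S, rfl⟩
    have h : toPGL2 k (GeneralLinearGroup.map f (SpecialLinearGroup.toGL S')) =
        toPGL2 k (g * GeneralLinearGroup.map f (SpecialLinearGroup.toGL S) * g⁻¹) := by
      rw [map_mul, map_mul, map_inv]
      exact hS'
    have hdet (T : SpecialLinearGroup (Fin 2) F) :
        ((T : Matrix (Fin 2) (Fin 2) F).map f).det = 1 := by
      rw [← RingHom.mapMatrix_apply, ← RingHom.map_det, T.det_coe, map_one]
    rcases val_eq_or_eq_neg_of_toPGL2_eq h (by simp [hdet, (isUnits_det_units g).ne_zero])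
      with h | h
    · exact ⟨S', h⟩
    · exact ⟨-S', by rw [Matrix.map_neg _ (map_neg f)]; exact h⟩
  obtain ⟨P, hP⟩ := GeneralLinearGroup.exists_map_inv_mul_mem_center f g
    (GeneralLinearGroup.exists_conj_map_eq_map_of_span_eq_top f
      (SpecialLinearGroup.span_range_coe_eq_top ha hasq) hSL)
  exact ⟨P, QuotientGroup.eq.2 hP⟩

namespace Subgroup

variable {Γ : Type*} [Group Γ]

lemma normalizer_le_of_commutator_eq {P Q : Subgroup Γ} (hQ : ⁅Q, Q⁆ = P)
    (hP : normalizer (P : Set Γ) ≤ Q) : normalizer (Q : Set Γ) ≤ Q := by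
  intro x hx
  rw [mem_normalizer_iff_map_conj_eq] at hx
  apply hP
  rw [mem_normalizer_iff_map_conj_eq, ← hQ, map_commutator, hx]

theorem eq_or_eq_iff_of_commutator_le {P Q H L : Subgroup Γ} (hP : ⁅P, P⁆ = P) (hQ : ⁅Q, Q⁆ = P)
    (hnorm : normalizer (P : Set Γ) ≤ Q) (hPQ : ∀ K : Subgroup Γ, P ≤ K → K ≤ Q → K = P ∨ K = Q)
    (hHL : H ≤ L) (hLH : L ≤ normalizer (H : Set Γ)) (hL : ⁅L, L⁆ ≤ H) :
    (H = P ∨ H = Q) ↔ (L = P ∨ L = Q) := by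
  constructor
  · rintro (rfl | rfl)
    · exact hPQ L hHL (hLH.trans hnorm)
    · exact .inr (le_antisymm (hLH.trans (normalizer_le_of_commutator_eq hQ hnorm)) hHL)
  · rintro (rfl | rfl)
    · exact .inl (le_antisymm hHL (hP.ge.trans hL))
    · exact hPQ H (hQ.ge.trans hL) hHL

lemma le_normalizer_map_subtype {G : Subgroup Γ} (N : Subgroup G) [N.Normal] :
    G ≤ normalizer (N.map G.subtype : Set Γ) := by
  have : ((N.map G.subtype).subgroupOf G).Normal := by
    rwa [← comap_subtype, comap_map_eq_self_of_injective G.subtype_injective]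
  exact le_normalizer_of_normal_subgroupOf (map_subtype_le N)

lemma commutator_le_map_subtype_of_commute {G : Subgroup Γ} {N : Subgroup G} [N.Normal]
    (hab : ∀ x y : G ⧸ N, x * y = y * x) : ⁅G, G⁆ ≤ N.map G.subtype := by
  let _ : CommGroup (G ⧸ N) := { mul_comm := hab }
  rw [← map_subtype_commutator]
  exact map_mono <| (Abelianization.commutator_subset_ker (QuotientGroup.mk' N)).trans
    (QuotientGroup.ker_mk' N).le

end Subgroup

/-- For `G ≤ PGL₂(k)` (`k` an algebraic closure of `𝔽₅`) with a normal subgroup `N` such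
that `G/N` is abelian: `N` is conjugate to `PSL₂(𝔽₅)` or `PGL₂(𝔽₅)` iff `G` is. -/
theorem conj_psl_or_pgl_five_iff_of_normal
    (G : Subgroup (PGL2 (AlgebraicClosure (ZMod 5)))) (N : Subgroup ↥G) [N.Normal]
    (hab : ∀ x y : ↥G ⧸ N, x * y = y * x) :
    (IsConjSubgroup (N.map G.subtype)
        (PSLsub (algebraMap (ZMod 5) (AlgebraicClosure (ZMod 5)))) ∨
      IsConjSubgroup (N.map G.subtype)
        (PGLsub (algebraMap (ZMod 5) (AlgebraicClosure (ZMod 5))))) ↔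
    (IsConjSubgroup G (PSLsub (algebraMap (ZMod 5) (AlgebraicClosure (ZMod 5)))) ∨
      IsConjSubgroup G (PGLsub (algebraMap (ZMod 5) (AlgebraicClosure (ZMod 5))))) := by
  set f := algebraMap (ZMod 5) (AlgebraicClosure (ZMod 5))
  have h2 : (2 : ZMod 5) ≠ 0 := by decide
  have h2sq : (2 : ZMod 5) ^ 2 ≠ 1 := by decide
  have : Group.IsPerfect (SpecialLinearGroup (Fin 2) (ZMod 5)) := ⟨SL2.commutator_eq_top h2 h2sq⟩
  simp only [IsConjSubgroup, ← exists_or]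
  refine exists_congr fun a => Subgroup.eq_or_eq_iff_of_commutator_le (commutator_PSLsub f)
    (commutator_PGLsub f) (normalizer_PSLsub_le f h2 h2sq) (fun _ => eq_PSLsub_or_eq_PGLsub_of_le f)
    (Subgroup.map_mono (Subgroup.map_subtype_le N)) ?_ ?_
  · rw [← Subgroup.map_equiv_normalizer_eq]
    exact Subgroup.map_mono (Subgroup.le_normalizer_map_subtype N)
  · rw [← Subgroup.map_commutator]
    exact Subgroup.map_mono (Subgroup.commutator_le_map_subtype_of_commute hab)
end
end
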